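/- arXiv:1603.00781 — 5 statements merged into one kernel-verified Lean document; each statement's English description precedes it below -/
import Mathlib

section
/- Let q : ℝ² → ℂ and ρ : ℝ² → ℝ be smooth functions of (y,s), let c ∈ ℝ, c ≠ 0, and define κ_g + i κ_n = -i q (i.e. κ_g = Im q, κ_n = -Re q), τ_r = -1/c (constant), α + i β = c q_s (i.e. α = c Re(q_s), β = c Im(q_s)), and γ = c ρ. Then the three compatibility equations κ_{g,s} = α_y + κ_n γ − τ_r β, κ_{n,s} = β_y − κ_g γ + τ_r α, τ_{r,s} = γ_y − κ_g β + κ_n α hold identically if and only if the pair (q, ρ) satisfies the defocusing complex coupled dispersionless (CCD) system q_{ys} = ρ q and ρ_y − (1/2)(|q|²)_s = 0. -/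
noncomputable section

/-- Partial derivative with respect to the first variable (`y`). -/
def pd1 {E : Type*} [NormedAddCommGroup E] [NormedSpace ℝ E] (F : ℝ → ℝ → E) (y s : ℝ) : E :=
  deriv (fun u => F u s) y

/-- Partial derivative with respect to the second variable (`s`). -/
def pd2 {E : Type*} [NormedAddCommGroup E] [NormedSpace ℝ E] (F : ℝ → ℝ → E) (y s : ℝ) : E :=
  deriv (fun v => F y v) s

/-- with `κ_g = Im q`, `κ_n = -Re q`, `τ_r = -1/c`, `α = c Re(q_s)`,
`β = c Im(q_s)`, `γ = c ρ`, the three Darboux-frame compatibility equations hold identically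
iff `(q, ρ)` satisfies the defocusing complex coupled dispersionless system
`q_{ys} = ρ q`, `ρ_y − (1/2)(|q|²)_s = 0`. -/
theorem curve_compat_iff_defocusing_ccd (c : ℝ) (hc : c ≠ 0)
    (q : ℝ → ℝ → ℂ) (ρ : ℝ → ℝ → ℝ)
    (hq : ContDiff ℝ (⊤ : ℕ∞) (Function.uncurry q)) (hρ : ContDiff ℝ (⊤ : ℕ∞) (Function.uncurry ρ)) :
    (∀ y s : ℝ,
        -- κ_{g,s} = α_y + κ_n γ − τ_r β
        (pd2 (fun u v => (q u v).im) y s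
          = pd1 (fun u v => c * (pd2 q u v).re) y s
            + (-(q y s).re) * (c * ρ y s) - (-1 / c) * (c * (pd2 q y s).im))
        -- κ_{n,s} = β_y − κ_g γ + τ_r α
        ∧ (pd2 (fun u v => -(q u v).re) y s
          = pd1 (fun u v => c * (pd2 q u v).im) y s
            - (q y s).im * (c * ρ y s) + (-1 / c) * (c * (pd2 q y s).re))
        -- τ_{r,s} = γ_y − κ_g β + κ_n α
        ∧ (pd2 (fun _ _ => -1 / c) y s
          = pd1 (fun u v => c * ρ u v) y s
            - (q y s).im * (c * (pd2 q y s).im) + (-(q y s).re) * (c * (pd2 q y s).re)))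
      ↔ (∀ y s : ℝ,
          pd1 (pd2 q) y s = (ρ y s : ℂ) * q y s
            ∧ pd1 ρ y s - (1 / 2) * pd2 (fun u v => ‖q u v‖ ^ 2) y s = 0) := by
  have hqd : Differentiable ℝ (Function.uncurry q) := hq.differentiable (by simp)
  -- s-derivative of q as a function of both variables
  have hs : ∀ u v : ℝ, HasDerivAt (fun v => q u v)
      (fderiv ℝ (Function.uncurry q) (u, v) (0, 1)) v := by
    intro u v
    have h1 : HasDerivAt (fun v : ℝ => (u, v)) ((0 : ℝ), (1 : ℝ)) v :=
      (hasDerivAt_const v u).prodMk (hasDerivAt_id v)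
    have := (hqd (u, v)).hasFDerivAt.comp_hasDerivAt v h1
    exact this
  set F : ℝ × ℝ → ℂ := fun p => fderiv ℝ (Function.uncurry q) p (0, 1) with hF
  have hFsmooth : ContDiff ℝ (⊤ : ℕ∞) F :=
    (hq.fderiv_right (by simp)).clm_apply contDiff_const
  have hFd : Differentiable ℝ F := hFsmooth.differentiable (by simp)
  have hFq : ∀ u v, pd2 q u v = F (u, v) := fun u v => (hs u v).deriv
  have hGd : ∀ s y : ℝ, DifferentiableAt ℝ (fun u => F (u, s)) y := by
    intro s y
    exact (hFd _).comp y ((differentiable_id.prodMk (differentiable_const s)) y)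
  -- y-derivative of ρ
  have hρd : ∀ s y : ℝ, DifferentiableAt ℝ (fun u => ρ u s) y := by
    intro s y
    exact ((hρ.differentiable (by simp)) _).comp y
      ((differentiable_id.prodMk (differentiable_const s)) y)
  refine forall_congr' fun y => forall_congr' fun s => ?_
  -- abbreviations
  set a := (q y s).re with ha
  set b := (q y s).im with hb
  set p := (F (y, s)).re with hp
  set r := (F (y, s)).im with hr
  have hGy : HasDerivAt (fun u => F (u, s)) (pd1 (pd2 q) y s) y := by
    have h1 : (fun u => pd2 q u s) = fun u => F (u, s) := funext fun u => hFq u s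
    have := (hGd s y).hasDerivAt
    rwa [pd1, h1]
  set D := pd1 (pd2 q) y s with hD
  -- component derivative facts
  have hre : HasDerivAt (fun v => (q y v).re) p s := by
    exact (Complex.reCLM.hasFDerivAt.comp_hasDerivAt s (hs y s))
  have him : HasDerivAt (fun v => (q y v).im) r s := by
    exact (Complex.imCLM.hasFDerivAt.comp_hasDerivAt s (hs y s))
  have hGre : HasDerivAt (fun u => (F (u, s)).re) D.re y := by
    exact (Complex.reCLM.hasFDerivAt.comp_hasDerivAt y hGy)
  have hGim : HasDerivAt (fun u => (F (u, s)).im) D.im y := by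
    exact (Complex.imCLM.hasFDerivAt.comp_hasDerivAt y hGy)
  -- compute all the pd's appearing in the statement
  have e1 : pd2 (fun u v => (q u v).im) y s = r := him.deriv
  have e2 : pd1 (fun u v => c * (pd2 q u v).re) y s = c * D.re := by
    have h1 : (fun u => c * (pd2 q u s).re) = fun u => c * (F (u, s)).re :=
      funext fun u => by rw [hFq]
    rw [pd1, h1]
    exact (hGre.const_mul c).deriv
  have e3 : pd2 (fun u v => -(q u v).re) y s = -p := hre.neg.deriv
  have e4 : pd1 (fun u v => c * (pd2 q u v).im) y s = c * D.im := by
    have h1 : (fun u => c * (pd2 q u s).im) = fun u => c * (F (u, s)).im :=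
      funext fun u => by rw [hFq]
    rw [pd1, h1]
    exact (hGim.const_mul c).deriv
  have e5 : pd2 (fun _ _ : ℝ => -1 / c) y s = 0 := deriv_const _ _
  have e6 : pd1 (fun u v => c * ρ u v) y s = c * pd1 ρ y s := by
    rw [pd1, pd1]
    exact (((hρd s y).hasDerivAt).const_mul c).deriv
  have e7 : pd2 q y s = F (y, s) := hFq y s
  have e8 : pd2 (fun u v => ‖q u v‖ ^ 2) y s = 2 * (a * p + b * r) := by
    have hnorm : (fun v => ‖q y v‖ ^ 2)
        = fun v => (q y v).re ^ 2 + (q y v).im ^ 2 := by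
      funext v
      rw [Complex.sq_norm, Complex.normSq_apply]
      ring
    rw [pd2, hnorm]
    have := ((hre.pow 2).add (him.pow 2)).deriv
    rw [show (fun v => (q y v).re ^ 2 + (q y v).im ^ 2) = (fun v => (q y v).re) ^ 2 + (fun v => (q y v).im) ^ 2 from rfl, this]
    push_cast
    ring
  rw [e1, e2, e3, e4, e5, e6, e7, e8]
  have hmul : ∀ x : ℝ, (-1 / c) * (c * x) = -x := fun x => by
    field_simp
  constructor
  · rintro ⟨h1, h2, h3⟩
    have hre' : D.re = ρ y s * a := by
      have : c * D.re = c * (ρ y s * a) := by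
        have hx := hmul r
        rw [hx] at h1
        linear_combination -h1
      exact mul_left_cancel₀ hc this
    have him' : D.im = ρ y s * b := by
      have : c * D.im = c * (ρ y s * b) := by
        have hx := hmul p
        rw [hx] at h2
        linarith [h2]
      exact mul_left_cancel₀ hc this
    constructor
    · apply Complex.ext
      · simpa [Complex.mul_re] using hre'
      · simpa [Complex.mul_im] using him'
    · have : c * pd1 ρ y s = c * (a * p + b * r) := by linear_combination -h3
      have h4 := mul_left_cancel₀ hc this
      rw [h4]; ring
  · rintro ⟨h1, h2⟩
    have hre' : D.re = ρ y s * a := by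
      have := congrArg Complex.re h1
      simpa [Complex.mul_re] using this
    have him' : D.im = ρ y s * b := by
      have := congrArg Complex.im h1
      simpa [Complex.mul_im] using this
    have h2' : pd1 ρ y s = a * p + b * r := by linarith [h2]
    refine ⟨?_, ?_, ?_⟩
    · rw [hre', hmul r]; ring
    · rw [him', hmul p]; ring
    · rw [h2']; ring
end
end

section
/- Let q : ℝ² → ℂ and ρ : ℝ² → ℝ be smooth functions of (y,s), and for λ ∈ ℝ, λ ≠ 0, define the 2×2 complex matrices U(y,s;λ) = [[iλ/2, -q/2],[-q̄/2, -iλ/2]] and V(y,s;λ) = -(i/(2λ))·[[ρ, q_s],[-q̄_s, -ρ]], where q̄ denotes the complex conjugate of q. Then the zero-curvature condition ∂_s U − ∂_y V + U·V − V·U = 0 holds identically for all λ ≠ 0 if and only if (q, ρ) satisfies the defocusing complex coupled dispersionless (CCD) system q_{ys} = ρ q and ρ_y − (1/2)(|q|²)_s = 0. -/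
noncomputable section

/-- The matrix `U(y,s;λ) = [[iλ/2, -q/2],[-q̄/2, -iλ/2]]`. -/
def Umat (q : ℝ → ℝ → ℂ) (lam : ℝ) (y s : ℝ) : Matrix (Fin 2) (Fin 2) ℂ :=
  !![Complex.I * (lam : ℂ) / 2, -(q y s) / 2;
     -(starRingEnd ℂ (q y s)) / 2, -(Complex.I * (lam : ℂ) / 2)]

/-- The matrix `V(y,s;λ) = -(i/(2λ))·[[ρ, q_s],[-q̄_s, -ρ]]`. -/
def Vmat (q : ℝ → ℝ → ℂ) (ρ : ℝ → ℝ → ℝ) (lam : ℝ) (y s : ℝ) : Matrix (Fin 2) (Fin 2) ℂ :=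
  (-(Complex.I) / (2 * (lam : ℂ))) •
    !![((ρ y s : ℝ) : ℂ), pd2 q y s;
       -(starRingEnd ℂ (pd2 q y s)), -((ρ y s : ℝ) : ℂ)]

lemma deriv_conj_comp (f : ℝ → ℂ) (x : ℝ) :
    deriv (fun t => (starRingEnd ℂ) (f t)) x = (starRingEnd ℂ) (deriv f x) := by
  have h : (fun t => (starRingEnd ℂ) (f t)) = Complex.conjLIE ∘ f := rfl
  rw [← fderiv_apply_one_eq_deriv, ← fderiv_apply_one_eq_deriv, h, Complex.conjLIE.comp_fderiv]
  rfl

lemma deriv_ofReal_comp' (g : ℝ → ℝ) (x : ℝ) :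
    deriv (fun t => ((g t : ℝ) : ℂ)) x = ((deriv g x : ℝ) : ℂ) := by
  by_cases h : DifferentiableAt ℝ g x
  · exact (h.hasDerivAt.ofReal_comp).deriv
  · rw [deriv_zero_of_not_differentiableAt h, deriv_zero_of_not_differentiableAt, Complex.ofReal_zero]
    intro hc
    apply h
    have := Complex.reCLM.differentiable.differentiableAt.comp x hc
    simpa [Function.comp_def] using this

lemma pd2_norm_sq (q : ℝ → ℝ → ℂ) (hq : ContDiff ℝ (⊤ : ℕ∞) (Function.uncurry q)) (y s : ℝ) :
    ((pd2 (fun u v => ‖q u v‖ ^ 2) y s : ℝ) : ℂ)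
      = starRingEnd ℂ (q y s) * pd2 q y s + q y s * starRingEnd ℂ (pd2 q y s) := by
  have hdq : DifferentiableAt ℝ (fun v => q y v) s := by
    exact ((hq.differentiable (by simp)).comp ((differentiable_const y).prodMk differentiable_id)) s
  have hd : HasDerivAt (fun v => q y v) (pd2 q y s) s := hdq.hasDerivAt
  have h1 : HasDerivAt (fun v => starRingEnd ℂ (q y v)) (starRingEnd ℂ (pd2 q y s)) s := by
    have := Complex.conjCLE.toContinuousLinearMap.hasFDerivAt.comp_hasDerivAt s hd
    exact this
  have hmul := hd.mul h1
  have hre := Complex.reCLM.hasFDerivAt.comp_hasDerivAt s hmul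
  have heq : (fun v => ‖q y v‖ ^ 2) = fun v => (q y v * starRingEnd ℂ (q y v)).re := by
    funext v
    rw [Complex.mul_conj]
    simp [Complex.normSq_eq_norm_sq, ← Complex.ofReal_pow]
  have hre' : HasDerivAt (fun v => (q y v * starRingEnd ℂ (q y v)).re)
      (Complex.reCLM (pd2 q y s * (starRingEnd ℂ) (q y s) + q y s * (starRingEnd ℂ) (pd2 q y s))) s := hre
  rw [show pd2 (fun u v => ‖q u v‖ ^ 2) y s = deriv (fun v => ‖q y v‖ ^ 2) s from rfl,
    heq, hre'.deriv]
  set p := pd2 q y s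
  set Q := q y s
  have hx : starRingEnd ℂ (p * starRingEnd ℂ Q + Q * starRingEnd ℂ p)
      = p * starRingEnd ℂ Q + Q * starRingEnd ℂ p := by
    simp [map_add, map_mul]; ring
  have := Complex.conj_eq_iff_re.mp hx
  simpa using this.trans (by ring)

lemma curvature_eq (q : ℝ → ℝ → ℂ) (ρ : ℝ → ℝ → ℝ) (hq : ContDiff ℝ (⊤ : ℕ∞) (Function.uncurry q))
    (lam : ℝ) (hlam : lam ≠ 0) (y s : ℝ) :
    (Matrix.of fun i j => pd2 (fun u v => Umat q lam u v i j) y s)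
      - (Matrix.of fun i j => pd1 (fun u v => Vmat q ρ lam u v i j) y s)
      + Umat q lam y s * Vmat q ρ lam y s - Vmat q ρ lam y s * Umat q lam y s
    = (Complex.I / (2 * lam)) •
        !![((pd1 ρ y s - (1/2) * pd2 (fun u v => ‖q u v‖ ^ 2) y s : ℝ) : ℂ),
            pd1 (pd2 q) y s - (ρ y s : ℂ) * q y s;
           -(starRingEnd ℂ (pd1 (pd2 q) y s - (ρ y s : ℂ) * q y s)),
           -((pd1 ρ y s - (1/2) * pd2 (fun u v => ‖q u v‖ ^ 2) y s : ℝ) : ℂ)] := by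
  have hlamC : (lam : ℂ) ≠ 0 := Complex.ofReal_ne_zero.mpr hlam
  have hI := Complex.I_mul_I
  ext i j
  fin_cases i <;> fin_cases j <;>
    simp only [Matrix.sub_apply, Matrix.add_apply, Matrix.of_apply, Matrix.mul_apply,
      Fin.sum_univ_two, Umat, Vmat, Matrix.smul_apply, smul_eq_mul, Matrix.cons_val',
      Matrix.cons_val_zero, Matrix.cons_val_one, Matrix.head_cons, Matrix.head_fin_const,
      Matrix.empty_val', Matrix.cons_val_fin_one, Fin.isValue, Fin.zero_eta, Fin.mk_one,
      pd1, pd2, deriv_const, deriv_const_mul_field, deriv_div_const, deriv.neg, deriv.fun_neg,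
      deriv_conj_comp, deriv_ofReal_comp', map_sub, map_mul, Complex.conj_ofReal]
  case _ => -- (0,0)
    have hN : ((deriv (fun v => ‖q y v‖ ^ 2) s : ℝ) : ℂ)
        = starRingEnd ℂ (q y s) * deriv (fun v => q y v) s
          + q y s * starRingEnd ℂ (deriv (fun v => q y v) s) := pd2_norm_sq q hq y s
    push_cast
    rw [hN]
    ring
  case _ => -- (0,1)
    have hM : ((lam : ℂ))⁻¹ * (lam : ℂ) = 1 := inv_mul_cancel₀ hlamC
    linear_combination (-((lam : ℂ) * ((lam : ℂ))⁻¹ * deriv (fun v => q y v) s) / 2) * hI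
      + (deriv (fun v => q y v) s / 2) * hM
  case _ => -- (1,0)
    have hM : ((lam : ℂ))⁻¹ * (lam : ℂ) = 1 := inv_mul_cancel₀ hlamC
    linear_combination
      (-((lam : ℂ) * ((lam : ℂ))⁻¹ * starRingEnd ℂ (deriv (fun v => q y v) s)) / 2) * hI
      + (starRingEnd ℂ (deriv (fun v => q y v) s) / 2) * hM
  case _ => -- (1,1)
    have hN : ((deriv (fun v => ‖q y v‖ ^ 2) s : ℝ) : ℂ)
        = starRingEnd ℂ (q y s) * deriv (fun v => q y v) s
          + q y s * starRingEnd ℂ (deriv (fun v => q y v) s) := pd2_norm_sq q hq y s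
    push_cast
    rw [hN]
    ring

/-- the zero-curvature condition `∂_s U − ∂_y V + U·V − V·U = 0` holds for all
`λ ≠ 0` iff `(q, ρ)` satisfies the defocusing CCD system `q_{ys} = ρ q`,
`ρ_y − (1/2)(|q|²)_s = 0`. -/
theorem ccd_lax_pair_zero_curvature (q : ℝ → ℝ → ℂ) (ρ : ℝ → ℝ → ℝ)
    (hq : ContDiff ℝ (⊤ : ℕ∞) (Function.uncurry q)) (hρ : ContDiff ℝ (⊤ : ℕ∞) (Function.uncurry ρ)) :
    (∀ lam : ℝ, lam ≠ 0 → ∀ y s : ℝ,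
        (Matrix.of fun i j => pd2 (fun u v => Umat q lam u v i j) y s)
          - (Matrix.of fun i j => pd1 (fun u v => Vmat q ρ lam u v i j) y s)
          + Umat q lam y s * Vmat q ρ lam y s
          - Vmat q ρ lam y s * Umat q lam y s = 0)
      ↔ (∀ y s : ℝ,
          pd1 (pd2 q) y s = (ρ y s : ℂ) * q y s
            ∧ pd1 ρ y s - (1 / 2) * pd2 (fun u v => ‖q u v‖ ^ 2) y s = 0) := by
  constructor
  · intro h y s
    have h1 := h 1 one_ne_zero y s
    rw [curvature_eq q ρ hq 1 one_ne_zero y s] at h1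
    have hc : (Complex.I / (2 * ((1 : ℝ) : ℂ)) : ℂ) ≠ 0 := by
      simp [Complex.I_ne_zero]
    rcases smul_eq_zero.mp h1 with h1 | h1
    · exact absurd h1 hc
    · have h00 : ((pd1 ρ y s - (1/2) * pd2 (fun u v => ‖q u v‖ ^ 2) y s : ℝ) : ℂ) = 0 :=
        congrFun (congrFun h1 0) 0
      have h01 : pd1 (pd2 q) y s - (ρ y s : ℂ) * q y s = 0 := congrFun (congrFun h1 0) 1
      refine ⟨sub_eq_zero.mp h01, ?_⟩
      exact_mod_cast h00
  · intro h lam hlam y s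
    rw [curvature_eq q ρ hq lam hlam y s]
    obtain ⟨h1, h2⟩ := h y s
    have hz : (!![((pd1 ρ y s - (1/2) * pd2 (fun u v => ‖q u v‖ ^ 2) y s : ℝ) : ℂ),
            pd1 (pd2 q) y s - (ρ y s : ℂ) * q y s;
           -(starRingEnd ℂ (pd1 (pd2 q) y s - (ρ y s : ℂ) * q y s)),
           -((pd1 ρ y s - (1/2) * pd2 (fun u v => ‖q u v‖ ^ 2) y s : ℝ) : ℂ)]
           : Matrix (Fin 2) (Fin 2) ℂ) = 0 := by
      have hb : pd1 (pd2 q) y s - (ρ y s : ℂ) * q y s = 0 := sub_eq_zero.mpr h1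
      ext i j
      fin_cases i <;> fin_cases j <;>
        simp only [Matrix.cons_val', Matrix.cons_val_zero, Matrix.cons_val_one, Matrix.head_cons,
          Matrix.empty_val', Matrix.cons_val_fin_one, Matrix.zero_apply, Fin.isValue,
          Matrix.head_fin_const, h2, hb, Complex.ofReal_zero, neg_zero, map_zero] <;> rfl
    rw [hz, smul_zero]
end
end

section
/- Let θ, ω : ℝ² → ℝ be smooth functions of (y,s) with cos θ and sin θ nowhere vanishing, and define q := (θ_y − i ω_y tan θ) e^{-iω} and ρ := cos θ. Then the pair of real equations θ_{ys} = sin θ + (tan θ) ω_y ω_s and (ω_s cos θ)_y = (ω_y / cos θ)_s holds identically if and only if q_s = sin θ · e^{-iω} holds identically; and in that case (q, ρ) satisfies the focusing complex coupled dispersionless system q_{ys} = ρ q and ρ_y + (1/2)(|q|²)_s = 0. -/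
noncomputable section

/-- `q := (θ_y − i ω_y tan θ) e^{-iω}`. -/
def qfun (θ ω : ℝ → ℝ → ℝ) (y s : ℝ) : ℂ :=
  (Complex.ofReal (pd1 θ y s) - Complex.I * Complex.ofReal (pd1 ω y s) * Complex.ofReal (Real.tan (θ y s))) *
    Complex.exp (-(Complex.I) * (ω y s : ℂ))

namespace CCDaux

open Function

variable {F : ℝ → ℝ → ℝ}

lemma hasDerivAt_pd1 (hF : ContDiff ℝ (⊤ : ℕ∞) (uncurry F)) (y s : ℝ) :
    HasDerivAt (fun u => F u s) (pd1 F y s) y := by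
  have h : DifferentiableAt ℝ (fun u => F u s) y :=
    ((hF.differentiable (by simp)) (y, s)).comp (f := fun u : ℝ => ((u, s) : ℝ × ℝ)) y
      (differentiableAt_id.prodMk (differentiableAt_const s))
  exact h.hasDerivAt

lemma hasDerivAt_pd2 (hF : ContDiff ℝ (⊤ : ℕ∞) (uncurry F)) (y s : ℝ) :
    HasDerivAt (fun v => F y v) (pd2 F y s) s := by
  have h : DifferentiableAt ℝ (fun v => F y v) s :=
    ((hF.differentiable (by simp)) (y, s)).comp s
      ((differentiableAt_const y).prodMk differentiableAt_id)
  exact h.hasDerivAt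

lemma pd1_eq (hF : ContDiff ℝ (⊤ : ℕ∞) (uncurry F)) (y s : ℝ) :
    pd1 F y s = fderiv ℝ (uncurry F) (y, s) (1, 0) := by
  have h := (((hF.differentiable (by simp)) (y, s)).hasFDerivAt).comp_hasDerivAt y
      ((hasDerivAt_id y).prodMk (hasDerivAt_const y s))
  exact h.deriv.symm ▸ rfl

lemma pd2_eq (hF : ContDiff ℝ (⊤ : ℕ∞) (uncurry F)) (y s : ℝ) :
    pd2 F y s = fderiv ℝ (uncurry F) (y, s) (0, 1) := by
  have h := (((hF.differentiable (by simp)) (y, s)).hasFDerivAt).comp_hasDerivAt s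
      ((hasDerivAt_const s y).prodMk (hasDerivAt_id s))
  exact h.deriv.symm ▸ rfl

lemma contDiff_pd1 (hF : ContDiff ℝ (⊤ : ℕ∞) (uncurry F)) :
    ContDiff ℝ (⊤ : ℕ∞) (uncurry (pd1 F)) := by
  have h : uncurry (pd1 F) = fun p : ℝ × ℝ => fderiv ℝ (uncurry F) p (1, 0) := by
    funext p
    exact pd1_eq hF p.1 p.2
  rw [h]
  exact (hF.fderiv_right (by simp)).clm_apply contDiff_const

lemma contDiff_pd2 (hF : ContDiff ℝ (⊤ : ℕ∞) (uncurry F)) :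
    ContDiff ℝ (⊤ : ℕ∞) (uncurry (pd2 F)) := by
  have h : uncurry (pd2 F) = fun p : ℝ × ℝ => fderiv ℝ (uncurry F) p (0, 1) := by
    funext p
    exact pd2_eq hF p.1 p.2
  rw [h]
  exact (hF.fderiv_right (by simp)).clm_apply contDiff_const

lemma clairaut (hF : ContDiff ℝ (⊤ : ℕ∞) (uncurry F)) (y s : ℝ) :
    pd1 (pd2 F) y s = pd2 (pd1 F) y s := by
  set G := uncurry F with hG
  have hdiff : Differentiable ℝ G := hF.differentiable (by simp)
  have hfd : Differentiable ℝ (fderiv ℝ G) := (hF.fderiv_right (m := (⊤ : ℕ∞)) (by simp)).differentiable (by simp)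
  have hsymm := second_derivative_symmetric (f := G) (f' := fderiv ℝ G)
      (f'' := fderiv ℝ (fderiv ℝ G) (y, s))
      (fun p => (hdiff p).hasFDerivAt) ((hfd (y, s)).hasFDerivAt)
  have e1 : pd1 (pd2 F) y s = fderiv ℝ (fderiv ℝ G) (y, s) (1, 0) (0, 1) := by
    have hfun : (fun u => pd2 F u s) = fun u => fderiv ℝ G (u, s) (0, 1) := by
      funext u; exact pd2_eq hF u s
    have hv : HasDerivAt (fun u : ℝ => ((u, s) : ℝ × ℝ)) (1, 0) y :=
      (hasDerivAt_id y).prodMk (hasDerivAt_const y s)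
    have hc := ((hfd (y, s)).hasFDerivAt).comp_hasDerivAt y hv
    have happ := ((ContinuousLinearMap.apply ℝ ℝ ((0 : ℝ), (1 : ℝ))).hasFDerivAt).comp_hasDerivAt y hc
    have : pd1 (pd2 F) y s = deriv (fun u => fderiv ℝ G (u, s) (0, 1)) y := by
      show deriv (fun u => pd2 F u s) y = _
      rw [hfun]
    rw [this]; exact happ.deriv
  have e2 : pd2 (pd1 F) y s = fderiv ℝ (fderiv ℝ G) (y, s) (0, 1) (1, 0) := by
    have hfun : (fun v => pd1 F y v) = fun v => fderiv ℝ G (y, v) (1, 0) := by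
      funext v; exact pd1_eq hF y v
    have hv : HasDerivAt (fun v : ℝ => ((y, v) : ℝ × ℝ)) (0, 1) s :=
      (hasDerivAt_const s y).prodMk (hasDerivAt_id s)
    have hc := ((hfd (y, s)).hasFDerivAt).comp_hasDerivAt s hv
    have happ := ((ContinuousLinearMap.apply ℝ ℝ ((1 : ℝ), (0 : ℝ))).hasFDerivAt).comp_hasDerivAt s hc
    have : pd2 (pd1 F) y s = deriv (fun v => fderiv ℝ G (y, v) (1, 0)) s := by
      show deriv (fun v => pd1 F y v) s = _
      rw [hfun]
    rw [this]; exact happ.deriv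
  rw [e1, e2, hsymm]

end CCDaux

namespace CCDaux

lemma qfun_pd2 (θ ω : ℝ → ℝ → ℝ) (hθ : ContDiff ℝ (⊤ : ℕ∞) (Function.uncurry θ))
    (hω : ContDiff ℝ (⊤ : ℕ∞) (Function.uncurry ω))
    (hcos : ∀ y s, Real.cos (θ y s) ≠ 0) (y s : ℝ) :
    pd2 (qfun θ ω) y s =
      (Complex.ofReal (pd2 (pd1 θ) y s)
          - (Complex.I * Complex.ofReal (pd2 (pd1 ω) y s) * Complex.ofReal (Real.tan (θ y s))
            + Complex.I * Complex.ofReal (pd1 ω y s) *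
                Complex.ofReal (1 / Real.cos (θ y s) ^ 2 * pd2 θ y s))) *
        Complex.exp (-Complex.I * Complex.ofReal (ω y s))
      + (Complex.ofReal (pd1 θ y s) - Complex.I * Complex.ofReal (pd1 ω y s) *
            Complex.ofReal (Real.tan (θ y s))) *
        (-Complex.I * Complex.ofReal (pd2 ω y s) * Complex.exp (-Complex.I * Complex.ofReal (ω y s))) := by
  have hA := (hasDerivAt_pd2 (contDiff_pd1 hθ) y s).ofReal_comp
  have hB := (hasDerivAt_pd2 (contDiff_pd1 hω) y s).ofReal_comp
  have hθ2 := hasDerivAt_pd2 hθ y s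
  have hW := (hasDerivAt_pd2 hω y s).ofReal_comp
  have hT := ((Real.hasDerivAt_tan (hcos y s)).comp s hθ2).ofReal_comp
  have hE : HasDerivAt (fun v => Complex.exp (-Complex.I * ((ω y v : ℝ) : ℂ)))
      (-Complex.I * ((pd2 ω y s : ℝ) : ℂ) * Complex.exp (-Complex.I * ((ω y s : ℝ) : ℂ))) s := by
    have h1 := (hW.const_mul (-Complex.I)).cexp
    convert h1 using 1
    ring
  have hInner := hA.sub ((hB.const_mul Complex.I).mul hT)
  have hQ := hInner.mul hE
  exact hQ.deriv

lemma qfun_norm_sq (θ ω : ℝ → ℝ → ℝ) (y s : ℝ) :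
    ‖qfun θ ω y s‖ ^ 2 = pd1 θ y s ^ 2 + pd1 ω y s ^ 2 * Real.tan (θ y s) ^ 2 := by
  simp [qfun, map_mul, Complex.norm_exp, Complex.sq_norm,
    Complex.normSq_apply, mul_pow, Complex.tan_ofReal_re]
  ring

end CCDaux

namespace CCDaux

lemma alg_cplx (A' M a b T2 r sn t : ℝ) (E : ℂ) (hE : E ≠ 0) :
    ((Complex.ofReal A' - (Complex.I * Complex.ofReal M * Complex.ofReal t
        + Complex.I * Complex.ofReal b * Complex.ofReal T2)) * E
      + (Complex.ofReal a - Complex.I * Complex.ofReal b * Complex.ofReal t) *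
          (-Complex.I * Complex.ofReal r * E)
      = Complex.ofReal sn * E)
      ↔ (A' = sn + t * b * r ∧ M * t + b * T2 + a * r = 0) := by
  have hZ : ((Complex.ofReal A' - (Complex.I * Complex.ofReal M * Complex.ofReal t
        + Complex.I * Complex.ofReal b * Complex.ofReal T2)) * E
      + (Complex.ofReal a - Complex.I * Complex.ofReal b * Complex.ofReal t) *
          (-Complex.I * Complex.ofReal r * E))
      = ((Complex.ofReal A' - (Complex.I * Complex.ofReal M * Complex.ofReal t
        + Complex.I * Complex.ofReal b * Complex.ofReal T2))
        + (Complex.ofReal a - Complex.I * Complex.ofReal b * Complex.ofReal t) *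
          (-Complex.I * Complex.ofReal r)) * E := by ring
  rw [hZ, mul_left_inj' hE, Complex.ext_iff]
  simp
  constructor
  · rintro ⟨h1, h2⟩
    constructor <;> linarith
  · rintro ⟨h1, h2⟩
    constructor <;> linarith

lemma alg_codazzi (a b p r m c sn t : ℝ) (hc : c ≠ 0) (hsn : sn ≠ 0)
    (hpy : sn ^ 2 + c ^ 2 = 1) (ht : t = sn / c) :
    (m * c + r * (-sn * a) = (m * c - b * (-sn * p)) / c ^ 2)
      ↔ (m * t + b * (1 / c ^ 2 * p) + a * r = 0) := by
  subst ht
  rw [eq_div_iff (pow_ne_zero 2 hc)]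
  constructor <;> intro h
  · have h2 : m * (sn / c) + b * (1 / c ^ 2 * p) + a * r
        = -(1 / (sn * c ^ 2)) * ((m * c + r * (-sn * a)) * c ^ 2 - (m * c - b * (-sn * p)))
          + (m * c / (sn * c ^ 2)) * ((sn ^ 2 + c ^ 2) - 1) := by
      field_simp
      ring
    rw [h2, h, hpy]
    ring
  · have h2 : (m * c + r * (-sn * a)) * c ^ 2
        = (m * c - b * (-sn * p)) + m * c * ((sn ^ 2 + c ^ 2) - 1)
          - sn * c ^ 2 * (m * (sn / c) + b * (1 / c ^ 2 * p) + a * r) := by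
      field_simp
      ring
    rw [h2, hpy, h]
    ring

end CCDaux

open CCDaux in
/-- with `q = (θ_y − i ω_y tan θ)e^{-iω}` and `ρ = cos θ`, the Theorema egregium
`θ_{ys} = sin θ + (tan θ) ω_y ω_s` together with the Mainardi–Codazzi equation
`(ω_s cos θ)_y = (ω_y / cos θ)_s` holds identically iff `q_s = sin θ · e^{-iω}` holds
identically; and in that case `(q, ρ)` satisfies the focusing CCD system. -/
theorem focusing_ccd_from_surface (θ ω : ℝ → ℝ → ℝ)
    (hθ : ContDiff ℝ (⊤ : ℕ∞) (Function.uncurry θ)) (hω : ContDiff ℝ (⊤ : ℕ∞) (Function.uncurry ω))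
    (hcos : ∀ y s : ℝ, Real.cos (θ y s) ≠ 0) (hsin : ∀ y s : ℝ, Real.sin (θ y s) ≠ 0) :
    ((∀ y s : ℝ,
        pd2 (pd1 θ) y s = Real.sin (θ y s) + Real.tan (θ y s) * pd1 ω y s * pd2 ω y s
          ∧ pd1 (fun u v => pd2 ω u v * Real.cos (θ u v)) y s
              = pd2 (fun u v => pd1 ω u v / Real.cos (θ u v)) y s)
      ↔ (∀ y s : ℝ,
          pd2 (qfun θ ω) y s
            = (Real.sin (θ y s) : ℂ) * Complex.exp (-(Complex.I) * (ω y s : ℂ))))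
    ∧ ((∀ y s : ℝ,
          pd2 (qfun θ ω) y s
            = (Real.sin (θ y s) : ℂ) * Complex.exp (-(Complex.I) * (ω y s : ℂ))) →
        (∀ y s : ℝ,
          pd1 (pd2 (qfun θ ω)) y s = (Real.cos (θ y s) : ℂ) * qfun θ ω y s
            ∧ pd1 (fun u v => Real.cos (θ u v)) y s
                + (1 / 2) * pd2 (fun u v => ‖qfun θ ω u v‖ ^ 2) y s = 0)) := by
  -- Codazzi ↔ imaginary-part identity
  have hMC : ∀ y s : ℝ,
      (pd1 (fun u v => pd2 ω u v * Real.cos (θ u v)) y s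
          = pd2 (fun u v => pd1 ω u v / Real.cos (θ u v)) y s)
        ↔ (pd2 (pd1 ω) y s * Real.tan (θ y s)
            + pd1 ω y s * (1 / Real.cos (θ y s) ^ 2 * pd2 θ y s) + pd1 θ y s * pd2 ω y s = 0) := by
    intro y s
    have e1 : pd1 (fun u v => pd2 ω u v * Real.cos (θ u v)) y s
        = pd1 (pd2 ω) y s * Real.cos (θ y s)
          + pd2 ω y s * (-Real.sin (θ y s) * pd1 θ y s) :=
      ((hasDerivAt_pd1 (contDiff_pd2 hω) y s).mul ((hasDerivAt_pd1 hθ y s).cos)).deriv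
    have e2 : pd2 (fun u v => pd1 ω u v / Real.cos (θ u v)) y s
        = (pd2 (pd1 ω) y s * Real.cos (θ y s)
            - pd1 ω y s * (-Real.sin (θ y s) * pd2 θ y s)) / Real.cos (θ y s) ^ 2 :=
      ((hasDerivAt_pd2 (contDiff_pd1 hω) y s).div ((hasDerivAt_pd2 hθ y s).cos) (hcos y s)).deriv
    rw [e1, e2, clairaut hω y s]
    exact alg_codazzi (pd1 θ y s) (pd1 ω y s) (pd2 θ y s) (pd2 ω y s) (pd2 (pd1 ω) y s)
      (Real.cos (θ y s)) (Real.sin (θ y s)) (Real.tan (θ y s)) (hcos y s) (hsin y s)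
      (Real.sin_sq_add_cos_sq (θ y s)) (Real.tan_eq_sin_div_cos (θ y s))
  -- pointwise equivalence with the complex equation
  have key : ∀ y s : ℝ,
      (pd2 (pd1 θ) y s = Real.sin (θ y s) + Real.tan (θ y s) * pd1 ω y s * pd2 ω y s
        ∧ pd1 (fun u v => pd2 ω u v * Real.cos (θ u v)) y s
            = pd2 (fun u v => pd1 ω u v / Real.cos (θ u v)) y s)
      ↔ pd2 (qfun θ ω) y s
          = (Real.sin (θ y s) : ℂ) * Complex.exp (-(Complex.I) * (ω y s : ℂ)) := by
    intro y s
    rw [qfun_pd2 θ ω hθ hω hcos y s,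
      alg_cplx (pd2 (pd1 θ) y s) (pd2 (pd1 ω) y s) (pd1 θ y s) (pd1 ω y s)
        (1 / Real.cos (θ y s) ^ 2 * pd2 θ y s) (pd2 ω y s) (Real.sin (θ y s))
        (Real.tan (θ y s)) _ (Complex.exp_ne_zero _)]
    exact and_congr Iff.rfl (hMC y s)
  constructor
  · exact ⟨fun h y s => (key y s).1 (h y s), fun h y s => (key y s).2 (h y s)⟩
  · intro H y s
    obtain ⟨h1, h2⟩ : (pd2 (pd1 θ) y s
        = Real.sin (θ y s) + Real.tan (θ y s) * pd1 ω y s * pd2 ω y s)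
        ∧ (pd2 (pd1 ω) y s * Real.tan (θ y s)
            + pd1 ω y s * (1 / Real.cos (θ y s) ^ 2 * pd2 θ y s) + pd1 θ y s * pd2 ω y s = 0) := by
      have := (key y s).2 (H y s)
      exact ⟨this.1, (hMC y s).1 this.2⟩
    constructor
    · -- q_{ys} = ρ q
      have hrw : pd2 (qfun θ ω)
          = fun u v => (Real.sin (θ u v) : ℂ) * Complex.exp (-(Complex.I) * (ω u v : ℂ)) :=
        funext fun u => funext fun v => H u v
      rw [hrw]
      have hb := hasDerivAt_pd1 hω y s
      have hE : HasDerivAt (fun u => Complex.exp (-(Complex.I) * ((ω u s : ℝ) : ℂ)))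
          (-Complex.I * Complex.ofReal (pd1 ω y s)
            * Complex.exp (-(Complex.I) * ((ω y s : ℝ) : ℂ))) y := by
        have h := ((hb.ofReal_comp).const_mul (-Complex.I)).cexp
        convert h using 1
        ring
      have hS : HasDerivAt (fun u => ((Real.sin (θ u s) : ℝ) : ℂ))
          (((Real.cos (θ y s) * pd1 θ y s : ℝ) : ℂ)) y :=
        ((hasDerivAt_pd1 hθ y s).sin).ofReal_comp
      have e : pd1 (fun u v => (Real.sin (θ u v) : ℂ)
            * Complex.exp (-(Complex.I) * (ω u v : ℂ))) y s
          = ((Real.cos (θ y s) * pd1 θ y s : ℝ) : ℂ)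
              * Complex.exp (-(Complex.I) * ((ω y s : ℝ) : ℂ))
            + ((Real.sin (θ y s) : ℝ) : ℂ)
              * (-Complex.I * Complex.ofReal (pd1 ω y s)
                  * Complex.exp (-(Complex.I) * ((ω y s : ℝ) : ℂ))) :=
        (hS.mul hE).deriv
      rw [e]
      show _ = (Real.cos (θ y s) : ℂ) * qfun θ ω y s
      rw [qfun, Real.tan_eq_sin_div_cos]
      have hc' : ((Real.cos (θ y s) : ℝ) : ℂ) ≠ 0 := by
        exact_mod_cast Complex.ofReal_ne_zero.mpr (hcos y s)
      have hc2 : Complex.cos ((θ y s : ℝ) : ℂ) ≠ 0 := by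
        rw [← Complex.ofReal_cos]
        exact_mod_cast hcos y s
      push_cast
      field_simp [hc2]
      ring
    · -- ρ_y + (1/2)(|q|²)_s = 0
      have hpc : pd1 (fun u v => Real.cos (θ u v)) y s
          = -Real.sin (θ y s) * pd1 θ y s := ((hasDerivAt_pd1 hθ y s).cos).deriv
      have hfun : (fun v => ‖qfun θ ω y v‖ ^ 2)
          = fun v => pd1 θ y v ^ 2 + pd1 ω y v ^ 2 * Real.tan (θ y v) ^ 2 :=
        funext fun v => qfun_norm_sq θ ω y v
      have hA := hasDerivAt_pd2 (contDiff_pd1 hθ) y s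
      have hB := hasDerivAt_pd2 (contDiff_pd1 hω) y s
      have hT := (Real.hasDerivAt_tan (hcos y s)).comp s (hasDerivAt_pd2 hθ y s)
      have hD := (hA.pow 2).add ((hB.pow 2).mul (hT.pow 2))
      have hnorm : pd2 (fun u v => ‖qfun θ ω u v‖ ^ 2) y s
          = 2 * pd1 θ y s * pd2 (pd1 θ) y s
            + (2 * pd1 ω y s * pd2 (pd1 ω) y s * Real.tan (θ y s) ^ 2
              + pd1 ω y s ^ 2
                * (2 * Real.tan (θ y s) * (1 / Real.cos (θ y s) ^ 2 * pd2 θ y s))) := by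
        show deriv (fun v => ‖qfun θ ω y v‖ ^ 2) s = _
        rw [hfun]
        refine hD.deriv.trans ?_
        simp only [Pi.pow_apply, Function.comp_apply]
        push_cast
        ring
      rw [hpc, hnorm]
      linear_combination pd1 θ y s * h1 + pd1 ω y s * Real.tan (θ y s) * h2
end
end

section
/- Let f : ℝ² → ℝ be a smooth positive function and g : ℝ² → ℂ a smooth function of (y,s). Then the identity (D_y D_s g·f) / f² = (g/f)_{ys} + 2 (∂_y ∂_s log f) · (g/f) holds identically, where D_y D_s g·f = g_{ys} f − g_y f_s − g_s f_y + g f_{ys}. -/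
noncomputable section

lemma hasDerivAt_pd1 {E : Type*} [NormedAddCommGroup E] [NormedSpace ℝ E] {F : ℝ → ℝ → E}
    (hF : ContDiff ℝ (⊤ : ℕ∞) (Function.uncurry F)) (y s : ℝ) :
    HasDerivAt (fun u => F u s) (pd1 F y s) y := by
  have h : DifferentiableAt ℝ (fun u => F u s) y := by
    have he : (fun u => F u s) = Function.uncurry F ∘ (fun u => (u, s)) := rfl
    rw [he]
    exact ((hF.differentiable (by simp)) (y, s)).comp y
      (differentiableAt_id.prodMk (differentiableAt_const s))
  exact h.hasDerivAt

lemma hasDerivAt_pd2 {E : Type*} [NormedAddCommGroup E] [NormedSpace ℝ E] {F : ℝ → ℝ → E}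
    (hF : ContDiff ℝ (⊤ : ℕ∞) (Function.uncurry F)) (y s : ℝ) :
    HasDerivAt (fun v => F y v) (pd2 F y s) s := by
  have h : DifferentiableAt ℝ (fun v => F y v) s := by
    have he : (fun v => F y v) = Function.uncurry F ∘ (fun v => (y, v)) := rfl
    rw [he]
    exact ((hF.differentiable (by simp)) (y, s)).comp s
      ((differentiableAt_const y).prodMk differentiableAt_id)
  exact h.hasDerivAt

lemma pd2_eq_fderiv {E : Type*} [NormedAddCommGroup E] [NormedSpace ℝ E] {F : ℝ → ℝ → E}
    (hF : ContDiff ℝ (⊤ : ℕ∞) (Function.uncurry F)) (y s : ℝ) :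
    pd2 F y s = fderiv ℝ (Function.uncurry F) (y, s) (0, 1) := by
  have h1 : HasDerivAt (fun v : ℝ => ((y : ℝ), v)) ((0 : ℝ), (1 : ℝ)) s :=
    (hasDerivAt_const s y).prodMk (hasDerivAt_id s)
  have hd : HasDerivAt (fun v => F y v) (fderiv ℝ (Function.uncurry F) (y, s) (0, 1)) s :=
    (((hF.differentiable (by simp)) (y, s)).hasFDerivAt).comp_hasDerivAt s h1
  exact hd.deriv

lemma contDiff_pd2 {E : Type*} [NormedAddCommGroup E] [NormedSpace ℝ E] {F : ℝ → ℝ → E}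
    (hF : ContDiff ℝ (⊤ : ℕ∞) (Function.uncurry F)) :
    ContDiff ℝ (⊤ : ℕ∞) (Function.uncurry (pd2 F)) := by
  have he : Function.uncurry (pd2 F) =
      fun p : ℝ × ℝ => fderiv ℝ (Function.uncurry F) p (0, 1) := by
    funext p
    exact pd2_eq_fderiv hF p.1 p.2
  rw [he]
  exact (hF.fderiv_right (by simp)).clm_apply contDiff_const

/-- the bilinear identity
`(D_y D_s g·f)/f² = (g/f)_{ys} + 2 (∂_y ∂_s log f)·(g/f)`. -/
theorem hirota_bilinear_identity (f : ℝ → ℝ → ℝ) (g : ℝ → ℝ → ℂ)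
    (hf : ContDiff ℝ (⊤ : ℕ∞) (Function.uncurry f)) (hg : ContDiff ℝ (⊤ : ℕ∞) (Function.uncurry g))
    (hfpos : ∀ y s : ℝ, 0 < f y s) :
    ∀ y s : ℝ,
      (pd1 (pd2 g) y s * ((f y s : ℝ) : ℂ) - pd1 g y s * ((pd2 f y s : ℝ) : ℂ)
            - pd2 g y s * ((pd1 f y s : ℝ) : ℂ) + g y s * ((pd1 (pd2 f) y s : ℝ) : ℂ))
          / ((f y s : ℝ) : ℂ) ^ 2
        = pd1 (pd2 fun u v => g u v / ((f u v : ℝ) : ℂ)) y s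
          + 2 * ((pd1 (pd2 fun u v => Real.log (f u v)) y s : ℝ) : ℂ)
              * (g y s / ((f y s : ℝ) : ℂ)) := by
  have hne : ∀ y s : ℝ, f y s ≠ 0 := fun y s => (hfpos y s).ne'
  have hneC : ∀ y s : ℝ, ((f y s : ℝ) : ℂ) ≠ 0 := fun y s => by
    exact_mod_cast Complex.ofReal_ne_zero.mpr (hne y s)
  -- complex-cast derivatives of f
  have hfC1 : ∀ y s : ℝ, HasDerivAt (fun u => ((f u s : ℝ) : ℂ)) ((pd1 f y s : ℝ) : ℂ) y :=
    fun y s => Complex.ofRealCLM.hasFDerivAt.comp_hasDerivAt y (hasDerivAt_pd1 hf y s)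
  have hfC2 : ∀ y s : ℝ, HasDerivAt (fun v => ((f y v : ℝ) : ℂ)) ((pd2 f y s : ℝ) : ℂ) s :=
    fun y s => Complex.ofRealCLM.hasFDerivAt.comp_hasDerivAt s (hasDerivAt_pd2 hf y s)
  have hf2C1 : ∀ y s : ℝ, HasDerivAt (fun u => ((pd2 f u s : ℝ) : ℂ))
      ((pd1 (pd2 f) y s : ℝ) : ℂ) y :=
    fun y s => Complex.ofRealCLM.hasFDerivAt.comp_hasDerivAt y
      (hasDerivAt_pd1 (contDiff_pd2 hf) y s)
  -- pd2 of the quotient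
  have hq2 : ∀ y s : ℝ, pd2 (fun u v => g u v / ((f u v : ℝ) : ℂ)) y s
      = (pd2 g y s * ((f y s : ℝ) : ℂ) - g y s * ((pd2 f y s : ℝ) : ℂ))
          / ((f y s : ℝ) : ℂ) ^ 2 := fun y s =>
    ((hasDerivAt_pd2 hg y s).div (hfC2 y s) (hneC y s)).deriv
  -- pd2 of log f
  have hl2 : ∀ y s : ℝ, pd2 (fun u v => Real.log (f u v)) y s = pd2 f y s / f y s :=
    fun y s => ((hasDerivAt_pd2 hf y s).log (hne y s)).deriv
  intro y s
  -- pd1 pd2 of log f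
  have hl12 : pd1 (pd2 fun u v => Real.log (f u v)) y s
      = (pd1 (pd2 f) y s * f y s - pd2 f y s * pd1 f y s) / f y s ^ 2 := by
    have he : (fun u => pd2 (fun u v => Real.log (f u v)) u s)
        = fun u => pd2 f u s / f u s := funext fun u => hl2 u s
    have hd : HasDerivAt (fun u => pd2 f u s / f u s)
        ((pd1 (pd2 f) y s * f y s - pd2 f y s * pd1 f y s) / f y s ^ 2) y :=
      (hasDerivAt_pd1 (contDiff_pd2 hf) y s).div (hasDerivAt_pd1 hf y s) (hne y s)
    show deriv (fun u => pd2 (fun u v => Real.log (f u v)) u s) y = _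
    rw [he]
    exact hd.deriv
  -- pd1 pd2 of the quotient
  have hq12 : pd1 (pd2 fun u v => g u v / ((f u v : ℝ) : ℂ)) y s
      = ((pd1 (pd2 g) y s * ((f y s : ℝ) : ℂ) + pd2 g y s * ((pd1 f y s : ℝ) : ℂ)
            - (pd1 g y s * ((pd2 f y s : ℝ) : ℂ) + g y s * ((pd1 (pd2 f) y s : ℝ) : ℂ)))
            * ((f y s : ℝ) : ℂ) ^ 2
          - (pd2 g y s * ((f y s : ℝ) : ℂ) - g y s * ((pd2 f y s : ℝ) : ℂ))
            * (((pd1 f y s : ℝ) : ℂ) * ((f y s : ℝ) : ℂ)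
              + ((f y s : ℝ) : ℂ) * ((pd1 f y s : ℝ) : ℂ)))
          / (((f y s : ℝ) : ℂ) ^ 2) ^ 2 := by
    have he : (fun u => pd2 (fun u v => g u v / ((f u v : ℝ) : ℂ)) u s)
        = fun u => (pd2 g u s * ((f u s : ℝ) : ℂ) - g u s * ((pd2 f u s : ℝ) : ℂ))
            / ((f u s : ℝ) : ℂ) ^ 2 := funext fun u => hq2 u s
    have hnum : HasDerivAt
        (fun u => pd2 g u s * ((f u s : ℝ) : ℂ) - g u s * ((pd2 f u s : ℝ) : ℂ))
        (pd1 (pd2 g) y s * ((f y s : ℝ) : ℂ) + pd2 g y s * ((pd1 f y s : ℝ) : ℂ)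
          - (pd1 g y s * ((pd2 f y s : ℝ) : ℂ) + g y s * ((pd1 (pd2 f) y s : ℝ) : ℂ))) y :=
      ((hasDerivAt_pd1 (contDiff_pd2 hg) y s).mul (hfC1 y s)).sub
        ((hasDerivAt_pd1 hg y s).mul (hf2C1 y s))
    have hden : HasDerivAt (fun u => ((f u s : ℝ) : ℂ) ^ 2)
        (((pd1 f y s : ℝ) : ℂ) * ((f y s : ℝ) : ℂ)
          + ((f y s : ℝ) : ℂ) * ((pd1 f y s : ℝ) : ℂ)) y := by
      rw [show (fun u => ((f u s : ℝ) : ℂ) ^ 2) = fun u => ((f u s : ℝ) : ℂ) * ((f u s : ℝ) : ℂ)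
        from funext fun u => pow_two _]
      exact (hfC1 y s).mul (hfC1 y s)
    have hd := hnum.div hden (pow_ne_zero 2 (hneC y s))
    show deriv (fun u => pd2 (fun u v => g u v / ((f u v : ℝ) : ℂ)) u s) y = _
    rw [he]
    exact hd.deriv
  rw [hq12, hl12]
  have h1 := hneC y s
  have h2 := hne y s
  push_cast
  field_simp
  ring
end
end

section
/- Let N ≥ 1, n ∈ ℤ, c ∈ ℝ with c ≠ 0, and set a = ic. Let p_1,…,p_N ∈ ℂ with |p_i| = 1, p_i ≠ ic, and p_i + p̄_j* ≠ 0 for all i,j (where * denotes complex conjugation), and let ξ_{10},…,ξ_{N0} ∈ ℂ. Define, for real variables (x_1, t_a), ξ_i = p_i x_1 + t_a/(p_i − ic) + ξ_{i0}, and the tau function τ_n(x_1, t_a) = det( δ_{ij} + (−p_i/p_j*)^n · e^{ξ_i + ξ_j*} / (p_i + p_j*) )_{1≤i,j≤N}. Then the complex conjugate of τ_n equals τ_{−n}: (τ_n)* = τ_{−n} for all real x_1, t_a. -/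
noncomputable section

/-- The reduced phase `ξ_i = p_i x_1 + t_a/(p_i − ic) + ξ_{i0}`. -/
def xiph {N : ℕ} (c : ℝ) (p xi0 : Fin N → ℂ) (i : Fin N) (x1 ta : ℝ) : ℂ :=
  p i * (x1 : ℂ) + (ta : ℂ) / (p i - Complex.I * (c : ℂ)) + xi0 i

/-- The reduced tau function
`τ_n = det(δ_{ij} + (−p_i/p_j*)^n e^{ξ_i + ξ_j*}/(p_i + p_j*))`. -/
def taun {N : ℕ} (c : ℝ) (p xi0 : Fin N → ℂ) (n : ℤ) (x1 ta : ℝ) : ℂ :=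
  Matrix.det (Matrix.of fun i j : Fin N =>
    (if i = j then (1 : ℂ) else 0) +
      (-(p i) / starRingEnd ℂ (p j)) ^ n *
        Complex.exp (xiph c p xi0 i x1 ta + starRingEnd ℂ (xiph c p xi0 j x1 ta))
        / (p i + starRingEnd ℂ (p j)))

/-! The conjugation `(τ_n)* = τ_{−n}` holds because the matrix under the determinant is
conjugated-transposed by `n ↦ −n`, and `det Mᴴ = (det M)*`. -/

open ComplexConjugate
open scoped Matrix

def tauMatrix {ι : Type*} [DecidableEq ι] (p z : ι → ℂ) (n : ℤ) : Matrix ι ι ℂ :=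
  Matrix.of fun i j => (if i = j then 1 else 0) +
    (-(p i) / conj (p j)) ^ n * Complex.exp (z i + conj (z j)) / (p i + conj (p j))

theorem conj_neg_div_conj_zpow (a b : ℂ) (n : ℤ) :
    conj ((-a / conj b) ^ n) = (-b / conj a) ^ (-n) := by
  rw [map_zpow₀, map_div₀, map_neg, Complex.conj_conj, zpow_neg, ← inv_zpow, inv_div,
    neg_div, div_neg]

theorem tauMatrix_conjTranspose {ι : Type*} [DecidableEq ι] (p z : ι → ℂ) (n : ℤ) :
    (tauMatrix p z n)ᴴ = tauMatrix p z (-n) := by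
  ext i j
  have hδ : conj (if j = i then (1 : ℂ) else 0) = if i = j then 1 else 0 := by
    simp only [apply_ite conj, map_one, map_zero, eq_comm]
  simp only [tauMatrix, Matrix.conjTranspose_apply, Matrix.of_apply, Complex.star_def, map_add,
    map_div₀, map_mul, hδ, conj_neg_div_conj_zpow, ← Complex.exp_conj, Complex.conj_conj,
    add_comm (z j), add_comm (conj (p j))]

theorem conj_det_tauMatrix {ι : Type*} [Fintype ι] [DecidableEq ι] (p z : ι → ℂ) (n : ℤ) :
    conj (tauMatrix p z n).det = (tauMatrix p z (-n)).det := by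
  rw [← tauMatrix_conjTranspose, Matrix.det_conjTranspose, Complex.star_def]

theorem tau_conjugation_reduction_general (N : ℕ) (n : ℤ) (c : ℝ)
    (p xi0 : Fin N → ℂ) :
    ∀ x1 ta : ℝ, starRingEnd ℂ (taun c p xi0 n x1 ta) = taun c p xi0 (-n) x1 ta :=
  fun x1 ta => conj_det_tauMatrix p (fun i => xiph c p xi0 i x1 ta) n

/-- the complex-conjugacy reduction `(τ_n)* = τ_{−n}`. -/
theorem tau_conjugation_reduction (N : ℕ) (hN : 1 ≤ N) (n : ℤ) (c : ℝ) (hc : c ≠ 0)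
    (p xi0 : Fin N → ℂ)
    (hunit : ∀ i : Fin N, ‖p i‖ = 1)
    (hpi : ∀ i : Fin N, p i ≠ Complex.I * (c : ℂ))
    (hsum : ∀ i j : Fin N, p i + starRingEnd ℂ (p j) ≠ 0) :
    ∀ x1 ta : ℝ, starRingEnd ℂ (taun c p xi0 n x1 ta) = taun c p xi0 (-n) x1 ta :=
  tau_conjugation_reduction_general N n c p xi0
end
end
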